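/- Fix integers C and k with 1 ≤ k and k + 1 ≤ C, and fix a pair of indices (i, j) ∈ {1,…,C}². For every matrix F ∈ ℝ^{C×C}, the function t ↦ R_soft(F^{(t)}), where F^{(t)} agrees with F in all entries except that its (i,j) entry equals t, is convex on ℝ and admits a unique global minimizer. -/

import Mathlib

/-!
Let `w = okoWeight ⟨i, S⟩` count the classes of an OKO tuple (2 on `i`, 1 on each member of `S`).
The tuple's logits are `v = w ᵥ* F` and its summand is the cross-entropy
`(∑ w) log ∑ exp v - w ⬝ᵥ v`. Changing `F i j` by `t` moves only `v j`, by `w i * t`, so each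
summand is, up to a constant, `x ↦ (∑ w) log (exp (a + x) + B) - w j * x` at `x = w i * t`, with
`B > 0`; this is strictly convex in `x`, and the tuple `⟨i, S⟩` with `i ∉ S` has `w i = 2`, so the
risk is strictly convex in `t`. Bounding `log (exp (a + x) + B)` below by `a + x` and by the other
logits gives affine lower bounds for the risk with slopes `∑ (∑ w - w j) * w i > 0` and
`-∑ w j * w i < 0`; a coercive strictly convex function has exactly one minimiser.
-/

open Real

/-- softmax of a vector `v ∈ ℝ^d`: `softmax v j = exp (v j) / ∑ m, exp (v m)`. -/
noncomputable def softmax {d : ℕ} (v : Fin d → ℝ) : Fin d → ℝ :=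
  fun j => Real.exp (v j) / ∑ m, Real.exp (v m)

/-- The soft OKO risk:
`R_soft(F) = −∑ᵢ ∑_{S ∈ 𝕐ᵢ} [2 log (softmax (2Fᵢ + ∑_{ℓ∈S} F_ℓ))ᵢ
  + ∑_{j∈S} log (softmax (2Fᵢ + ∑_{ℓ∈S} F_ℓ))ⱼ]`,
where `𝕐ᵢ` is the family of `k`-element subsets of `{1,…,C}` avoiding `i`. -/
noncomputable def Rsoft {C : ℕ} (k : ℕ) (F : Fin C → Fin C → ℝ) : ℝ :=
  -∑ i : Fin C,
    ∑ S ∈ Finset.univ.filter (fun S : Finset (Fin C) => S.card = k ∧ i ∉ S),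
      (2 * Real.log (softmax (fun j => 2 * F i j + ∑ ℓ ∈ S, F ℓ j) i)
        + ∑ j ∈ S, Real.log (softmax (fun m => 2 * F i m + ∑ ℓ ∈ S, F ℓ m) j))

open Finset Filter

section Convexity

variable {𝕜 E β ι : Type*} [Semiring 𝕜] [PartialOrder 𝕜] [AddCommMonoid E] [SMul 𝕜 E]
  [AddCommMonoid β] [PartialOrder β] {s : Set E}

theorem ConvexOn.sum [IsOrderedAddMonoid β] [DistribMulAction 𝕜 β] (hs : Convex 𝕜 s)
    {t : Finset ι} {f : ι → E → β} (hf : ∀ i ∈ t, ConvexOn 𝕜 s (f i)) :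
    ConvexOn 𝕜 s (∑ i ∈ t, f i) := by
  classical
  induction t using Finset.induction_on with
  | empty => exact ⟨hs, fun _ _ _ _ _ _ _ _ _ => by simp⟩
  | insert a t ha ih =>
    rw [sum_insert ha]
    exact (hf a (mem_insert_self a t)).add (ih fun i hi => hf i (mem_insert_of_mem hi))

theorem StrictConvexOn.sum_of_mem [IsOrderedCancelAddMonoid β] [DistribMulAction 𝕜 β]
    {t : Finset ι} {f : ι → E → β} {i : ι} (hi : i ∈ t) (hfi : StrictConvexOn 𝕜 s (f i))
    (hf : ∀ j ∈ t, ConvexOn 𝕜 s (f j)) : StrictConvexOn 𝕜 s (fun x => ∑ j ∈ t, f j x) := by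
  classical
  simp only [← Finset.sum_apply, ← add_sum_erase t f hi]
  exact hfi.add_convexOn (ConvexOn.sum hfi.1 fun j hj => hf j (mem_of_mem_erase hj))

end Convexity

theorem StrictConvexOn.comp_const_mul {f : ℝ → ℝ} (hf : StrictConvexOn ℝ Set.univ f) {c : ℝ}
    (hc : c ≠ 0) : StrictConvexOn ℝ Set.univ (fun t => f (c * t)) := by
  refine ⟨convex_univ, fun x _ y _ hxy a b ha hb hab => ?_⟩
  have := hf.2 (Set.mem_univ (c * x)) (Set.mem_univ (c * y)) (by simpa [hc] using hxy) ha hb hab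
  simpa only [smul_eq_mul, mul_add, mul_left_comm c] using this

theorem ConvexOn.comp_const_mul {f : ℝ → ℝ} (hf : ConvexOn ℝ Set.univ f) (c : ℝ) :
    ConvexOn ℝ Set.univ (fun t => f (c * t)) :=
  hf.comp_linearMap (LinearMap.mul ℝ ℝ c)

theorem StrictConvexOn.existsUnique_forall_le {f : ℝ → ℝ} (hf : StrictConvexOn ℝ Set.univ f)
    {a a' K K' : ℝ} (ha : 0 < a) (ha' : a' < 0) (hK : ∀ t, a * t + K ≤ f t)
    (hK' : ∀ t, a' * t + K' ≤ f t) : ∃! t₀, ∀ t, f t₀ ≤ f t := by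
  have hcont : Continuous f :=
    continuousOn_univ.1 (hf.convexOn.continuousOn isOpen_univ)
  have htop : Tendsto f atTop atTop :=
    tendsto_atTop_mono hK (tendsto_atTop_add_const_right _ K (tendsto_id.const_mul_atTop ha))
  have hbot : Tendsto f atBot atTop :=
    tendsto_atTop_mono hK'
      (tendsto_atTop_add_const_right _ K' (tendsto_id.const_mul_atBot_of_neg ha'))
  obtain ⟨t₀, ht₀⟩ := hcont.exists_forall_le (by rw [cocompact_eq_atBot_atTop]; exact hbot.sup htop)
  exact ⟨t₀, ht₀, fun t ht => hf.eq_of_isMinOn (fun s _ => ht s) (fun s _ => ht₀ s)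
    (Set.mem_univ t) (Set.mem_univ t₀)⟩

theorem exists_forall_mul_add_le_sum {ι : Type*} (s : Finset ι) (a : ι → ℝ) {g : ι → ℝ → ℝ}
    (h : ∀ p ∈ s, ∃ K, ∀ t, a p * t + K ≤ g p t) :
    ∃ K, ∀ t, (∑ p ∈ s, a p) * t + K ≤ ∑ p ∈ s, g p t := by
  choose! K hK using h
  refine ⟨∑ p ∈ s, K p, fun t => ?_⟩
  rw [sum_mul, ← sum_add_distrib]
  exact sum_le_sum fun p hp => hK p hp t

theorem strictConvexOn_mul_log_exp_add_sub {α B : ℝ} (hα : 0 < α) (hB : 0 < B) (a β γ : ℝ) :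
    StrictConvexOn ℝ Set.univ (fun x => α * log (exp (a + x) + B) - β * x - γ) := by
  have hpos : ∀ x, 0 < exp (a + x) + B := fun x => by positivity
  have hderiv : ∀ x, HasDerivAt (fun x => α * log (exp (a + x) + B) - β * x - γ)
      (α * (exp (a + x) / (exp (a + x) + B)) - β) x := by
    intro x
    have hlog := (((hasDerivAt_id x).const_add a).exp.add_const B).log (hpos x).ne'
    simpa using ((hlog.const_mul α).sub ((hasDerivAt_id x).const_mul β)).sub_const γ
  refine StrictMono.strictConvexOn_univ_of_deriv
    (continuous_iff_continuousAt.2 fun x => (hderiv x).continuousAt) ?_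
  rw [show deriv _ = _ from funext fun x => (hderiv x).deriv]
  intro x y hxy
  have hexp : exp (a + x) < exp (a + y) := exp_lt_exp.2 (by linarith)
  have : exp (a + x) / (exp (a + x) + B) < exp (a + y) / (exp (a + y) + B) := by
    rw [div_lt_div_iff₀ (hpos x) (hpos y)]
    nlinarith
  simpa using mul_lt_mul_of_pos_left this hα

open Matrix

section CrossEntropy

variable {n : ℕ}

noncomputable def crossEntropy (w v : Fin n → ℝ) : ℝ :=
  -∑ m, w m * log (softmax v m)

theorem log_softmax (v : Fin n → ℝ) (j : Fin n) :
    log (softmax v j) = v j - log (∑ m, exp (v m)) := by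
  have hpos : 0 < ∑ m, exp (v m) := sum_pos (fun m _ => exp_pos (v m)) ⟨j, mem_univ j⟩
  rw [softmax, log_div (exp_ne_zero _) hpos.ne', log_exp]

theorem crossEntropy_eq (w v : Fin n → ℝ) :
    crossEntropy w v = (∑ m, w m) * log (∑ m, exp (v m)) - w ⬝ᵥ v := by
  simp only [crossEntropy, log_softmax, mul_sub, sum_sub_distrib, ← sum_mul, dotProduct]
  ring

theorem le_crossEntropy {w : Fin n → ℝ} (hw : 0 ≤ ∑ m, w m) (v : Fin n → ℝ) (i : Fin n) :
    (∑ m, w m) * v i - w ⬝ᵥ v ≤ crossEntropy w v := by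
  rw [crossEntropy_eq]
  gcongr
  rw [le_log_iff_exp_le (sum_pos (fun m _ => exp_pos (v m)) ⟨i, mem_univ i⟩)]
  exact single_le_sum (fun m _ => (exp_pos (v m)).le) (mem_univ i)

theorem crossEntropy_add_single (w v : Fin n → ℝ) (j : Fin n) (x : ℝ) :
    crossEntropy w (v + Pi.single j x) = (∑ m, w m) *
      log (exp (v j + x) + ∑ m ∈ univ.erase j, exp (v m)) - w j * x - w ⬝ᵥ v := by
  have hsum : ∑ m, exp ((v + Pi.single j x : Fin n → ℝ) m) =
      exp (v j + x) + ∑ m ∈ univ.erase j, exp (v m) := by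
    rw [← add_sum_erase _ _ (mem_univ j)]
    congr 1
    · simp
    · exact sum_congr rfl fun m hm => by simp [ne_of_mem_erase hm]
  rw [crossEntropy_eq, hsum, dotProduct_add, dotProduct_single]
  ring

theorem strictConvexOn_crossEntropy_add_single [Nontrivial (Fin n)] {w : Fin n → ℝ}
    (hw : 0 < ∑ m, w m) (v : Fin n → ℝ) (j : Fin n) :
    StrictConvexOn ℝ Set.univ (fun x => crossEntropy w (v + Pi.single j x)) := by
  obtain ⟨m, hm⟩ := exists_ne j
  have hB : 0 < ∑ m ∈ univ.erase j, exp (v m) :=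
    sum_pos (fun m _ => exp_pos (v m)) ⟨m, mem_erase.2 ⟨hm, mem_univ m⟩⟩
  simpa only [crossEntropy_add_single] using
    strictConvexOn_mul_log_exp_add_sub hw hB (v j) (w j) (w ⬝ᵥ v)

theorem le_crossEntropy_add_single {w : Fin n → ℝ} (hw : 0 ≤ ∑ m, w m) (v : Fin n → ℝ)
    (j : Fin n) (x : ℝ) :
    (∑ m, w m - w j) * x + ((∑ m, w m) * v j - w ⬝ᵥ v) ≤ crossEntropy w (v + Pi.single j x) := by
  have := le_crossEntropy hw (v + Pi.single j x) j
  simp only [Pi.add_apply, Pi.single_eq_same, dotProduct_add, dotProduct_single] at this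
  linarith

theorem le_crossEntropy_add_single_of_ne {w : Fin n → ℝ} (hw : 0 ≤ ∑ m, w m) (v : Fin n → ℝ)
    {i j : Fin n} (hij : i ≠ j) (x : ℝ) :
    -(w j) * x + ((∑ m, w m) * v i - w ⬝ᵥ v) ≤ crossEntropy w (v + Pi.single j x) := by
  have := le_crossEntropy hw (v + Pi.single j x) i
  simp only [Pi.add_apply, Pi.single_eq_of_ne hij, add_zero, dotProduct_add, dotProduct_single]
    at this
  linarith

end CrossEntropy

section OKO

variable {C k : ℕ}

abbrev OkoPair (C : ℕ) := (_ : Fin C) × Finset (Fin C)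

def okoWeight (p : OkoPair C) : Fin C → ℝ :=
  fun m => (if m = p.1 then 2 else 0) + if m ∈ p.2 then 1 else 0

def okoPairs (C k : ℕ) : Finset (OkoPair C) :=
  univ.sigma fun i => univ.filter fun S => S.card = k ∧ i ∉ S

def updateEntry (F : Fin C → Fin C → ℝ) (i j : Fin C) (t : ℝ) : Fin C → Fin C → ℝ :=
  fun a b => if a = i ∧ b = j then t else F a b

theorem mem_okoPairs {p : OkoPair C} :
    p ∈ okoPairs C k ↔ p.2.card = k ∧ p.1 ∉ p.2 := by
  simp [okoPairs]

theorem okoWeight_dotProduct (p : OkoPair C) (g : Fin C → ℝ) :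
    okoWeight p ⬝ᵥ g = 2 * g p.1 + ∑ m ∈ p.2, g m := by
  simp [okoWeight, dotProduct, add_mul, sum_add_distrib, ite_mul]

theorem sum_okoWeight (p : OkoPair C) :
    ∑ m, okoWeight p m = 2 + p.2.card := by
  simp [okoWeight, sum_add_distrib]

theorem sum_okoWeight_pos (p : OkoPair C) : 0 < ∑ m, okoWeight p m := by
  rw [sum_okoWeight]
  positivity

theorem okoWeight_nonneg (p : OkoPair C) (m : Fin C) : 0 ≤ okoWeight p m := by
  unfold okoWeight; positivity

theorem okoWeight_pos (p : OkoPair C) {m : Fin C} (hm : m = p.1 ∨ m ∈ p.2) :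
    0 < okoWeight p m := by
  unfold okoWeight; rcases hm with hm | hm <;> simp [hm] <;> positivity

theorem okoWeight_le_two {p : OkoPair C} (hp : p.1 ∉ p.2) (m : Fin C) :
    okoWeight p m ≤ 2 := by
  unfold okoWeight
  split_ifs with h₁ h₂
  · exact absurd (h₁ ▸ h₂) hp
  all_goals norm_num

theorem okoWeight_fst {p : OkoPair C} (hp : p.1 ∉ p.2) : okoWeight p p.1 = 2 := by
  simp [okoWeight, hp]

theorem vecMul_okoWeight (p : OkoPair C) (F : Fin C → Fin C → ℝ) :
    okoWeight p ᵥ* F = fun m => 2 * F p.1 m + ∑ ℓ ∈ p.2, F ℓ m :=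
  funext fun m => okoWeight_dotProduct p fun ℓ => F ℓ m

theorem vecMul_updateEntry (w : Fin C → ℝ) (F : Fin C → Fin C → ℝ) (i j : Fin C) (t : ℝ) :
    w ᵥ* updateEntry F i j t = w ᵥ* updateEntry F i j 0 + Pi.single j (w i * t) := by
  funext m
  by_cases hm : m = j
  · subst hm
    simp only [vecMul, dotProduct, updateEntry, and_true, Pi.add_apply, Pi.single_eq_same]
    have hoff : ∀ s : ℝ, ∑ ℓ ∈ univ.erase i, w ℓ * (if ℓ = i then s else F ℓ m) =
        ∑ ℓ ∈ univ.erase i, w ℓ * F ℓ m :=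
      fun s => sum_congr rfl fun ℓ hℓ => by rw [if_neg (ne_of_mem_erase hℓ)]
    rw [← add_sum_erase _ _ (mem_univ i), ← add_sum_erase _ _ (mem_univ i), hoff, hoff, if_pos rfl,
      if_pos rfl]
    ring
  · simp [vecMul, dotProduct, updateEntry, hm]

theorem Rsoft_eq_sum (F : Fin C → Fin C → ℝ) :
    Rsoft k F = ∑ p ∈ okoPairs C k, crossEntropy (okoWeight p) (okoWeight p ᵥ* F) := by
  rw [Rsoft, okoPairs, sum_sigma, ← sum_neg_distrib]
  refine sum_congr rfl fun i _ => ?_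
  rw [← sum_neg_distrib]
  refine sum_congr rfl fun S _ => ?_
  rw [crossEntropy, vecMul_okoWeight]
  exact congrArg Neg.neg
    (okoWeight_dotProduct ⟨i, S⟩ fun m => log (softmax (fun m => 2 * F i m + ∑ ℓ ∈ S, F ℓ m) m)).symm

theorem Rsoft_updateEntry (F : Fin C → Fin C → ℝ) (i j : Fin C) (t : ℝ) :
    Rsoft k (updateEntry F i j t) = ∑ p ∈ okoPairs C k, crossEntropy (okoWeight p)
      (okoWeight p ᵥ* updateEntry F i j 0 + Pi.single j (okoWeight p i * t)) := by
  rw [Rsoft_eq_sum]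
  exact sum_congr rfl fun p _ => by rw [vecMul_updateEntry _ F i j t]

theorem exists_mk_mem_okoPairs (hkC : k + 1 ≤ C) (i : Fin C) : ∃ S, ⟨i, S⟩ ∈ okoPairs C k := by
  obtain ⟨S, hS, hcard⟩ := exists_subset_card_eq (s := univ.erase i) (n := k) (by simp; omega)
  exact ⟨S, mem_okoPairs.2 ⟨hcard, fun hi => by simpa using hS hi⟩⟩

theorem exists_mk_mem_okoPairs_and_mem (hk : 1 ≤ k) (hkC : k + 1 ≤ C) {i j : Fin C} (hij : i ≠ j) :
    ∃ S, ⟨j, S⟩ ∈ okoPairs C k ∧ i ∈ S := by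
  obtain ⟨S, hiS, hS, hcard⟩ := exists_subsuperset_card_eq (s := {i}) (t := univ.erase j) (n := k)
    (by simpa using hij) (by simpa using hk) (by simp; omega)
  exact ⟨S, mem_okoPairs.2 ⟨hcard, fun hj => by simpa using hS hj⟩, by simpa using hiS⟩

theorem strictConvexOn_Rsoft_updateEntry [Nontrivial (Fin C)] (hkC : k + 1 ≤ C)
    (F : Fin C → Fin C → ℝ) (i j : Fin C) :
    StrictConvexOn ℝ Set.univ (fun t => Rsoft k (updateEntry F i j t)) := by
  have hline : ∀ p : OkoPair C, StrictConvexOn ℝ Set.univ fun x =>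
      crossEntropy (okoWeight p) (okoWeight p ᵥ* updateEntry F i j 0 + Pi.single j x) := fun p =>
    strictConvexOn_crossEntropy_add_single (sum_okoWeight_pos p) _ j
  obtain ⟨S, hS⟩ := exists_mk_mem_okoPairs hkC i
  simp only [Rsoft_updateEntry]
  refine StrictConvexOn.sum_of_mem hS ((hline _).comp_const_mul ?_)
    fun p _ => (hline p).convexOn.comp_const_mul _
  rw [okoWeight_fst (mem_okoPairs.1 hS).2]
  norm_num

theorem exists_pos_mul_add_le_Rsoft_updateEntry (hk : 1 ≤ k) (hkC : k + 1 ≤ C)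
    (F : Fin C → Fin C → ℝ) (i j : Fin C) :
    ∃ a > 0, ∃ K, ∀ t, a * t + K ≤ Rsoft k (updateEntry F i j t) := by
  have hslope (p : OkoPair C) :
      0 ≤ (∑ m, okoWeight p m - okoWeight p j) * okoWeight p i :=
    mul_nonneg (sub_nonneg.2 (single_le_sum (fun m _ => okoWeight_nonneg p m) (mem_univ j)))
      (okoWeight_nonneg p i)
  obtain ⟨S, hS⟩ := exists_mk_mem_okoPairs hkC i
  obtain ⟨hcard, hiS⟩ := mem_okoPairs.1 hS
  refine ⟨∑ p ∈ okoPairs C k, (∑ m, okoWeight p m - okoWeight p j) * okoWeight p i,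
    sum_pos' (fun p _ => hslope p) ⟨⟨i, S⟩, hS, ?_⟩, ?_⟩
  · have hj := okoWeight_le_two hiS j
    have hk' : (1 : ℝ) ≤ k := by exact_mod_cast hk
    rw [sum_okoWeight, okoWeight_fst hiS, hcard]
    nlinarith
  · simpa only [Rsoft_updateEntry] using exists_forall_mul_add_le_sum _ _ fun p _ =>
      ⟨_, fun t => by
        simpa only [mul_assoc] using le_crossEntropy_add_single (sum_okoWeight_pos p).le _ j (okoWeight p i * t)⟩

theorem exists_neg_mul_add_le_Rsoft_updateEntry (hk : 1 ≤ k) (hkC : k + 1 ≤ C)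
    (F : Fin C → Fin C → ℝ) (i j : Fin C) :
    ∃ a < 0, ∃ K, ∀ t, a * t + K ≤ Rsoft k (updateEntry F i j t) := by
  have : Nontrivial (Fin C) := Fin.nontrivial_iff_two_le.2 (by omega)
  obtain ⟨m, hm⟩ := exists_ne j
  obtain ⟨S, hS, hiS⟩ : ∃ S, ⟨j, S⟩ ∈ okoPairs C k ∧ (i = j ∨ i ∈ S) := by
    by_cases hij : i = j
    · obtain ⟨S, hS⟩ := exists_mk_mem_okoPairs hkC j
      exact ⟨S, hS, .inl hij⟩
    · obtain ⟨S, hS, hiS⟩ := exists_mk_mem_okoPairs_and_mem hk hkC hij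
      exact ⟨S, hS, .inr hiS⟩
  refine ⟨∑ p ∈ okoPairs C k, -(okoWeight p j * okoWeight p i), ?_, ?_⟩
  · rw [sum_neg_distrib, neg_lt_zero]
    refine sum_pos' (fun p _ => mul_nonneg (okoWeight_nonneg p j) (okoWeight_nonneg p i))
      ⟨⟨j, S⟩, hS, ?_⟩
    rw [okoWeight_fst (mem_okoPairs.1 hS).2]
    exact mul_pos two_pos (okoWeight_pos _ hiS)
  · simpa only [Rsoft_updateEntry] using exists_forall_mul_add_le_sum _ _ fun p _ =>
      ⟨_, fun t => by simpa only [neg_mul, mul_assoc] using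
        le_crossEntropy_add_single_of_ne (sum_okoWeight_pos p).le _ hm (okoWeight p i * t)⟩

end OKO

/-- For fixed indices `(i, j)`, the soft OKO risk, viewed as a function of the single
entry `F_{i,j}` (all other entries fixed), is convex and admits a unique global
minimizer. -/
theorem Rsoft_coordinate_convex_unique_min {C k : ℕ} (hk : 1 ≤ k) (hkC : k + 1 ≤ C)
    (i j : Fin C) (F : Fin C → Fin C → ℝ) :
    ConvexOn ℝ Set.univ
        (fun t : ℝ => Rsoft k (fun a b => if a = i ∧ b = j then t else F a b))
      ∧ ∃! t₀ : ℝ, ∀ t : ℝ,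
          Rsoft k (fun a b => if a = i ∧ b = j then t₀ else F a b)
            ≤ Rsoft k (fun a b => if a = i ∧ b = j then t else F a b) := by
  have : Nontrivial (Fin C) := Fin.nontrivial_iff_two_le.2 (by omega)
  have hf := strictConvexOn_Rsoft_updateEntry hkC F i j
  obtain ⟨a, ha, K, hK⟩ := exists_pos_mul_add_le_Rsoft_updateEntry hk hkC F i j
  obtain ⟨a', ha', K', hK'⟩ := exists_neg_mul_add_le_Rsoft_updateEntry hk hkC F i j
  exact ⟨hf.convexOn, hf.existsUnique_forall_le ha ha' hK hK'⟩
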